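/- Let G be a finite group of odd order and let p be the smallest prime divisor of |G|. If l(G) > 2^{-1/2} · p^{-(p+1)/(2p)}, then G is cyclic. Here l(G) = ρ(G)^(1/|G|)/|G| and ρ(G) is the product of the orders of all elements of G. -/

import Mathlib

noncomputable def lfun (G : Type*) [Group G] [Fintype G] : ℝ :=
  ((∏ g : G, orderOf g : ℕ) : ℝ) ^ ((1 : ℝ) / (Fintype.card G : ℝ)) / (Fintype.card G : ℝ)

noncomputable def psi2 (G : Type*) [Group G] [Fintype G] : ℝ :=
  ((∑ g : G, orderOf g : ℕ) : ℝ) / ((Fintype.card G : ℝ)) ^ 2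

/-!
If `G` is not cyclic, every element order is a proper divisor of `|G|` and hence at most
`|G| / p`, so `ρ(G) ≤ (|G| / p) ^ |G|` and `l(G) ≤ 1 / p`. Since `|G|` is odd, `p ≥ 3`, and for
such `p` the inequality `1 / p ≤ 2 ^ (-1/2) · p ^ (-(p+1)/(2p))` is equivalent, after taking
logarithms and clearing denominators, to `2 ^ p ≤ p ^ (p - 1)`.
-/

lemma Nat.le_div_of_dvd_of_ne {d n p : ℕ} (hn : 0 < n) (hp : 0 < p)
    (hmin : ∀ q : ℕ, q.Prime → q ∣ n → p ≤ q) (hd : d ∣ n) (hne : d ≠ n) : d ≤ n / p := by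
  obtain ⟨k, rfl⟩ := hd
  have hk0 : 0 < k := Nat.pos_of_ne_zero (by rintro rfl; simp at hn)
  have hk1 : k ≠ 1 := by rintro rfl; simp at hne
  have hpk : p ≤ k :=
    (hmin _ (Nat.minFac_prime hk1) ((Nat.minFac_dvd k).trans (dvd_mul_left k d))).trans
      (Nat.minFac_le hk0)
  calc d = d * k / k := (Nat.mul_div_cancel d hk0).symm
    _ ≤ d * k / p := Nat.div_le_div_left hpk hp

lemma orderOf_le_card_div_of_not_isCyclic {G : Type*} [Group G] [Fintype G] {p : ℕ} (hp : 0 < p)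
    (hmin : ∀ q : ℕ, q.Prime → q ∣ Fintype.card G → p ≤ q) (hnc : ¬IsCyclic G) (g : G) :
    orderOf g ≤ Fintype.card G / p :=
  Nat.le_div_of_dvd_of_ne Fintype.card_pos hp hmin orderOf_dvd_card fun h =>
    hnc (isCyclic_of_orderOf_eq_card g (by rwa [Nat.card_eq_fintype_card]))

lemma lfun_le_of_forall_orderOf_le {G : Type*} [Group G] [Fintype G] {m : ℕ}
    (hm : ∀ g : G, orderOf g ≤ m) : lfun G ≤ m / Fintype.card G := by
  have hprod : ((∏ g : G, orderOf g : ℕ) : ℝ) ≤ (m : ℝ) ^ Fintype.card G := by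
    exact_mod_cast Finset.prod_le_pow_card _ _ _ fun g _ => hm g
  unfold lfun
  gcongr
  calc ((∏ g : G, orderOf g : ℕ) : ℝ) ^ ((1 : ℝ) / Fintype.card G)
      ≤ ((m : ℝ) ^ Fintype.card G) ^ ((Fintype.card G : ℝ)⁻¹) := by
        rw [one_div]; gcongr
    _ = m := Real.pow_rpow_inv_natCast (Nat.cast_nonneg m) Fintype.card_ne_zero

lemma Nat.two_pow_le_pow_pred {p : ℕ} (hp : 3 ≤ p) : 2 ^ p ≤ p ^ (p - 1) := by
  obtain ⟨k, rfl⟩ : ∃ k, p = k + 3 := ⟨p - 3, by omega⟩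
  calc 2 ^ (k + 3) = 2 ^ k * 8 := by ring
    _ ≤ 3 ^ k * 9 := Nat.mul_le_mul (Nat.pow_le_pow_left (by norm_num) k) (by norm_num)
    _ = 3 ^ (k + 2) := by ring
    _ ≤ (k + 3) ^ (k + 2) := Nat.pow_le_pow_left (by omega) _

lemma inv_le_two_rpow_mul_rpow_of_three_le {p : ℕ} (hp : 3 ≤ p) :
    (p : ℝ)⁻¹ ≤ (2 : ℝ) ^ (-(1 / 2 : ℝ)) * (p : ℝ) ^ (-(((p : ℝ) + 1) / (2 * (p : ℝ)))) := by
  have hp0 : (0 : ℝ) < p := by positivity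
  have hlog : (p : ℝ) * Real.log 2 ≤ ((p : ℝ) - 1) * Real.log p := by
    have h := Real.log_le_log (by positivity)
      (show ((2 ^ p : ℕ) : ℝ) ≤ ((p ^ (p - 1) : ℕ) : ℝ) by exact_mod_cast Nat.two_pow_le_pow_pred hp)
    rwa [Nat.cast_pow, Nat.cast_pow, Real.log_pow, Real.log_pow,
      Nat.cast_sub (by omega : 1 ≤ p), Nat.cast_one, Nat.cast_ofNat] at h
  rw [← Real.log_le_log_iff (by positivity) (by positivity), Real.log_inv,
    Real.log_mul (by positivity) (by positivity), Real.log_rpow (by norm_num),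
    Real.log_rpow hp0]
  have hsplit : -(1 / 2 : ℝ) * Real.log 2 + -(((p : ℝ) + 1) / (2 * p)) * Real.log p
      = -Real.log p + (((p : ℝ) - 1) * Real.log p - p * Real.log 2) / (2 * p) := by
    field_simp
    ring
  rw [hsplit]
  linarith [div_nonneg (sub_nonneg.2 hlog) (by positivity : (0 : ℝ) ≤ 2 * p)]

theorem stmt19 (G : Type*) [Group G] [Fintype G] (p : ℕ) (hp : p.Prime)
    (hodd : Odd (Fintype.card G)) (hpd : p ∣ Fintype.card G)
    (hmin : ∀ q : ℕ, q.Prime → q ∣ Fintype.card G → p ≤ q)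
    (hl : lfun G > (2 : ℝ) ^ (-(1 / 2 : ℝ)) * (p : ℝ) ^ (-(((p : ℝ) + 1) / (2 * (p : ℝ))))) :
    IsCyclic G := by
  by_contra hnc
  have hp3 : 3 ≤ p := by
    obtain ⟨k, hk⟩ := hodd.of_dvd_nat hpd
    have := hp.two_le
    omega
  have hle : lfun G ≤ (p : ℝ)⁻¹ := by
    calc lfun G ≤ ((Fintype.card G / p : ℕ) : ℝ) / Fintype.card G :=
          lfun_le_of_forall_orderOf_le (orderOf_le_card_div_of_not_isCyclic hp.pos hmin hnc)
      _ ≤ ((Fintype.card G : ℝ) / p) / Fintype.card G := by gcongr; exact Nat.cast_div_le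
      _ = (p : ℝ)⁻¹ := by field_simp
  linarith [inv_le_two_rpow_mul_rpow_of_three_le hp3]
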